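/- arXiv:2107.06695 — 9 statements merged into one kernel-verified Lean document; each statement's English description precedes it below -/
import Mathlib

section
/- Under the complex property A M⁻¹ B = 0, the subspace M⁻¹·Range(B) equals the M-orthogonal complement of Ker(B U Bᴴ) in ℂ^N, for any Hermitian positive definite U. -/
open Matrix ComplexOrder

/-- If `x` is orthogonal to `ker Bᴴ`, then `x ∈ range B`. -/
lemma aux_mem_range {n m : ℕ} (B : Matrix (Fin n) (Fin m) ℂ) (x : Fin n → ℂ)
    (h : ∀ w : Fin n → ℂ, Bᴴ *ᵥ w = 0 → star w ⬝ᵥ x = 0) :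
    x ∈ LinearMap.range B.mulVecLin := by
  set G : Matrix (Fin n) (Fin n) ℂ := B * Bᴴ with hG
  have hGH : Gᴴ = G := by simp [hG, conjTranspose_mul]
  have kerG : ∀ v : Fin n → ℂ, G *ᵥ v = 0 ↔ Bᴴ *ᵥ v = 0 := fun v =>
    self_mul_conjTranspose_mulVec_eq_zero B v
  -- disjointness of range and ker of G
  have hdisj : LinearMap.range G.mulVecLin ⊓ LinearMap.ker G.mulVecLin = ⊥ := by
    rw [Submodule.eq_bot_iff]
    rintro v ⟨⟨y, rfl⟩, hv⟩
    simp only [LinearMap.mem_ker, mulVecLin_apply, mulVec_mulVec] at hv ⊢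
    have : (Gᴴ * G) *ᵥ y = 0 := by rw [hGH]; rwa [← mulVec_mulVec] 
    have hy : G *ᵥ y = 0 := (conjTranspose_mul_self_mulVec_eq_zero G y).mp this
    exact hy
  -- range ⊔ ker = ⊤
  have hsup : LinearMap.range G.mulVecLin ⊔ LinearMap.ker G.mulVecLin = ⊤ := by
    apply Submodule.eq_top_of_finrank_eq
    have h1 := Submodule.finrank_sup_add_finrank_inf_eq (LinearMap.range G.mulVecLin)
      (LinearMap.ker G.mulVecLin)
    rw [hdisj, finrank_bot, add_zero] at h1
    rw [h1, LinearMap.finrank_range_add_finrank_ker G.mulVecLin]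
  -- decompose x
  have hx : x ∈ LinearMap.range G.mulVecLin ⊔ LinearMap.ker G.mulVecLin := by
    rw [hsup]; trivial
  obtain ⟨r, hr, k, hk, rfl⟩ := Submodule.mem_sup.mp hx
  obtain ⟨y, rfl⟩ := hr
  rw [LinearMap.mem_ker, mulVecLin_apply] at hk
  have hkB : Bᴴ *ᵥ k = 0 := (kerG k).mp hk
  -- k = 0
  have h1 : star k ⬝ᵥ (G.mulVecLin y + k) = 0 := h k hkB
  have h2 : star k ⬝ᵥ (G.mulVecLin y) = 0 := by
    rw [mulVecLin_apply, dotProduct_mulVec]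
    have : star k ᵥ* G = star (Gᴴ *ᵥ k) := by
      rw [star_mulVec, conjTranspose_conjTranspose]
    rw [this, hGH, hk]
    simp
  rw [dotProduct_add, h2, zero_add] at h1
  have hk0 : k = 0 := dotProduct_star_self_eq_zero.mp h1
  subst hk0
  rw [add_zero, mulVecLin_apply, hG, ← mulVec_mulVec]
  exact ⟨Bᴴ *ᵥ y, by simp [mulVecLin_apply]⟩

theorem stmt8 {n m : ℕ}
    (A Mm : Matrix (Fin n) (Fin n) ℂ) (B : Matrix (Fin n) (Fin m) ℂ)
    (U : Matrix (Fin m) (Fin m) ℂ)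
    (hA : A.PosSemidef) (hM : Mm.PosDef) (hU : U.PosDef)
    (hAMB : A * Mm⁻¹ * B = 0) :
    ∀ u : Fin n → ℂ,
      u ∈ LinearMap.range (Mm⁻¹ * B).mulVecLin ↔
        ∀ w : Fin n → ℂ, (B * U * Bᴴ) *ᵥ w = 0 → star w ⬝ᵥ (Mm *ᵥ u) = 0 := by
  have hdet : IsUnit Mm.det := hM.det_pos.ne'.isUnit
  -- ker (B U Bᴴ) = ker Bᴴ
  have hker : ∀ w : Fin n → ℂ, (B * U * Bᴴ) *ᵥ w = 0 → Bᴴ *ᵥ w = 0 := by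
    intro w hw
    by_contra hne
    have h0 : star w ⬝ᵥ ((B * U * Bᴴ) *ᵥ w) = 0 := by rw [hw, dotProduct_zero]
    have heq : star w ⬝ᵥ ((B * U * Bᴴ) *ᵥ w)
        = star (Bᴴ *ᵥ w) ⬝ᵥ (U *ᵥ (Bᴴ *ᵥ w)) := by
      rw [star_mulVec, ← mulVec_mulVec, ← mulVec_mulVec, dotProduct_mulVec,
        conjTranspose_conjTranspose]
    have := hU.dotProduct_mulVec_pos hne
    rw [← heq, h0] at this
    exact lt_irrefl _ this
  intro u
  constructor
  · rintro ⟨v, rfl⟩ w hw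
    have hBw := hker w hw
    have : Mm *ᵥ ((Mm⁻¹ * B).mulVecLin v) = B *ᵥ v := by
      rw [mulVecLin_apply, mulVec_mulVec, ← Matrix.mul_assoc, Matrix.mul_nonsing_inv _ hdet,
        Matrix.one_mul]
    rw [this, dotProduct_mulVec]
    have hsw : star w ᵥ* B = star (Bᴴ *ᵥ w) := by
      rw [star_mulVec, conjTranspose_conjTranspose]
    rw [hsw, hBw]
    simp
  · intro h
    have hx : Mm *ᵥ u ∈ LinearMap.range B.mulVecLin :=
      aux_mem_range B (Mm *ᵥ u) (fun w hw => by
        apply h w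
        rw [← mulVec_mulVec, hw, mulVec_zero])
    obtain ⟨v, hv⟩ := hx
    refine ⟨v, ?_⟩
    rw [mulVecLin_apply] at hv ⊢
    rw [← mulVec_mulVec, hv, mulVec_mulVec, Matrix.nonsing_inv_mul _ hdet, one_mulVec]
end

section
/- Suppose A M⁻¹ B = 0, Ker(A + B U Bᴴ) = {0}, and c ≥ 0. If ũ solves (A + B U Bᴴ) ũ = F and u solves (A + B U Bᴴ + cM) u = F − B U Bᴴ ũ, then u satisfies Bᴴ u = 0 and there exists p ∈ ℂ^M with (A + cM) u + B p = F; moreover B p = B U Bᴴ ũ. -/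
open Matrix ComplexOrder

/-- Range of `Cᴴ * C` equals range of `Cᴴ`. -/
lemma range_conjTranspose_mul_self_aux {n m : ℕ} (C : Matrix (Fin n) (Fin m) ℂ) :
    LinearMap.range (Cᴴ * C).mulVecLin = LinearMap.range Cᴴ.mulVecLin := by
  have hle : LinearMap.range (Cᴴ * C).mulVecLin ≤ LinearMap.range Cᴴ.mulVecLin := by
    rw [Matrix.mulVecLin_mul]
    exact LinearMap.range_comp_le_range _ _
  have h1 : (Cᴴ * C).rank = C.rank := Matrix.rank_conjTranspose_mul_self C
  have h2 : Cᴴ.rank = C.rank := Matrix.rank_conjTranspose C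
  have hfr : Module.finrank ℂ (LinearMap.range Cᴴ.mulVecLin) ≤
      Module.finrank ℂ (LinearMap.range (Cᴴ * C).mulVecLin) := by
    change Cᴴ.rank ≤ (Cᴴ * C).rank
    rw [h1, h2]
  exact Submodule.eq_of_le_of_finrank_le hle hfr

theorem stmt9 {n m : ℕ}
    (A Mm : Matrix (Fin n) (Fin n) ℂ) (B : Matrix (Fin n) (Fin m) ℂ)
    (U : Matrix (Fin m) (Fin m) ℂ)
    (hA : A.PosSemidef) (hM : Mm.PosDef) (hU : U.PosDef)
    (hAMB : A * Mm⁻¹ * B = 0)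
    (hinv : IsUnit (A + B * U * Bᴴ))
    (c : ℝ) (hc : 0 ≤ c) (F utilde u : Fin n → ℂ)
    (htilde : (A + B * U * Bᴴ) *ᵥ utilde = F)
    (hu : (A + B * U * Bᴴ + (c : ℂ) • Mm) *ᵥ u = F - (B * U * Bᴴ) *ᵥ utilde) :
    Bᴴ *ᵥ u = 0 ∧
      ∃ p : Fin m → ℂ,
        (A + (c : ℂ) • Mm) *ᵥ u + B *ᵥ p = F ∧
          B *ᵥ p = (B * U * Bᴴ) *ᵥ utilde := by
  have hMinv : Mm⁻¹.PosDef := hM.inv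
  -- Bᴴ M⁻¹ A = 0
  have hBMA : Bᴴ * Mm⁻¹ * A = 0 := by
    have h := congrArg conjTranspose hAMB
    simpa [Matrix.conjTranspose_mul, Matrix.mul_assoc, hA.isHermitian.eq,
      hMinv.isHermitian.eq] using h
  -- main equation: (A + BUBᴴ + cM) u = A ũ
  have hE : (A + B * U * Bᴴ + (c : ℂ) • Mm) *ᵥ u = A *ᵥ utilde := by
    rw [hu, ← htilde]
    simp [Matrix.add_mulVec]
  -- the key claim
  have key : Bᴴ *ᵥ u = 0 := by
    rcases eq_or_lt_of_le hc with hc0 | hcpos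
    · -- c = 0 : use uniqueness and an explicit solution
      have hc0' : (c : ℂ) = 0 := by rw [← hc0]; simp
      have hE0 : (A + B * U * Bᴴ) *ᵥ u = A *ᵥ utilde := by
        have := hE
        rw [hc0'] at this
        simpa using this
      -- square root of M⁻¹
      set S := (open scoped MatrixOrder in CFC.sqrt Mm⁻¹) with hSdef
      have hS : S.PosSemidef := by
        open scoped MatrixOrder in exact Matrix.nonneg_iff_posSemidef.mp (CFC.sqrt_nonneg _)
      have hSS : S * S = Mm⁻¹ := by
        open scoped MatrixOrder in exact CFC.sqrt_mul_sqrt_self _ hMinv.posSemidef.nonneg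
      have hSH : Sᴴ = S := hS.isHermitian.eq
      have hSdet : IsUnit S.det := by
        have hMdet : IsUnit (Mm⁻¹).det := (Matrix.isUnit_iff_isUnit_det _).mp hMinv.isUnit
        rw [← hSS, Matrix.det_mul] at hMdet
        exact (isUnit_mul_self_iff.mp hMdet)
      -- the Gram matrix
      set C := S * B with hCdef
      have hCC : Cᴴ * C = Bᴴ * Mm⁻¹ * B := by
        rw [hCdef, Matrix.conjTranspose_mul, hSH, Matrix.mul_assoc, ← Matrix.mul_assoc S S B,
          hSS, ← Matrix.mul_assoc]
      -- Bᴴ ũ is in the range of Cᴴ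
      have hmem : Bᴴ *ᵥ utilde ∈ LinearMap.range Cᴴ.mulVecLin := by
        refine ⟨S⁻¹ *ᵥ utilde, ?_⟩
        rw [Matrix.mulVecLin_apply, hCdef, Matrix.conjTranspose_mul, hSH,
          Matrix.mulVec_mulVec, Matrix.mul_assoc, Matrix.mul_nonsing_inv _ hSdet, Matrix.mul_one]
      rw [← range_conjTranspose_mul_self_aux, hCC] at hmem
      obtain ⟨s, hs⟩ := hmem
      rw [Matrix.mulVecLin_apply] at hs
      -- explicit solution
      set u₀ := utilde - Mm⁻¹ *ᵥ (B *ᵥ s) with hu₀def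
      have hBu₀ : Bᴴ *ᵥ u₀ = 0 := by
        rw [hu₀def, Matrix.mulVec_sub, Matrix.mulVec_mulVec, Matrix.mulVec_mulVec, ← hs,
          Matrix.mul_assoc, sub_self]
      have hAu₀ : A *ᵥ u₀ = A *ᵥ utilde := by
        rw [hu₀def, Matrix.mulVec_sub, Matrix.mulVec_mulVec, Matrix.mulVec_mulVec, hAMB]
        simp
      have hEu₀ : (A + B * U * Bᴴ) *ᵥ u₀ = A *ᵥ utilde := by
        rw [Matrix.add_mulVec, hAu₀, Matrix.mul_assoc, ← Matrix.mulVec_mulVec,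
          ← Matrix.mulVec_mulVec, hBu₀]
        simp
      have := (Matrix.mulVec_injective_iff_isUnit.mpr hinv) (hE0.trans hEu₀.symm)
      rw [this, hBu₀]
    · -- c > 0 : positivity argument
      set w := Bᴴ *ᵥ u with hwdef
      set y := U *ᵥ w with hydef
      have heq : (Bᴴ * Mm⁻¹ * B) *ᵥ y + (c : ℂ) • w = 0 := by
        have h := congrArg (fun v => (Bᴴ * Mm⁻¹) *ᵥ v) hE
        simp only [Matrix.mulVec_mulVec] at h
        rw [Matrix.mul_add, Matrix.mul_add, ← Matrix.mul_assoc, hBMA, Matrix.mul_smul,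
          Matrix.mul_assoc Bᴴ Mm⁻¹ Mm,
          Matrix.nonsing_inv_mul _ ((Matrix.isUnit_iff_isUnit_det _).mp hM.isUnit),
          Matrix.mul_one] at h
        simp only [Matrix.add_mulVec, Matrix.zero_mulVec, zero_add,
          Matrix.smul_mulVec] at h
        rw [hydef, hwdef]
        simpa only [Matrix.mulVec_mulVec, Matrix.mul_assoc] using h
      by_contra hw
      have hG : (Bᴴ * Mm⁻¹ * B).PosSemidef := hMinv.posSemidef.conjTranspose_mul_mul_same B
      have t1 : (0 : ℂ) ≤ star y ⬝ᵥ ((Bᴴ * Mm⁻¹ * B) *ᵥ y) := hG.dotProduct_mulVec_nonneg y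
      have t2 : (0 : ℂ) < star y ⬝ᵥ w := by
        have : star y ⬝ᵥ w = star w ⬝ᵥ (U *ᵥ w) := by
          rw [hydef, Matrix.star_mulVec, ← Matrix.dotProduct_mulVec, hU.isHermitian.eq]
        rw [this]
        exact hU.dotProduct_mulVec_pos hw
      have hcC : (0 : ℂ) < (c : ℂ) := by
        rw [Complex.zero_lt_real]
        exact hcpos
      have hpos : (0 : ℂ) < star y ⬝ᵥ ((Bᴴ * Mm⁻¹ * B) *ᵥ y) + star y ⬝ᵥ ((c : ℂ) • w) := by
        refine add_pos_of_nonneg_of_pos t1 ?_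
        rw [dotProduct_smul]
        exact smul_pos hcC t2
      rw [← dotProduct_add, heq] at hpos
      simp at hpos
  refine ⟨key, ⟨U *ᵥ (Bᴴ *ᵥ utilde), ?_, ?_⟩⟩
  · have hz : (B * U * Bᴴ) *ᵥ u = 0 := by
      rw [Matrix.mul_assoc, ← Matrix.mulVec_mulVec, ← Matrix.mulVec_mulVec, key]
      simp
    have h2 := hu
    rw [Matrix.add_mulVec, Matrix.add_mulVec, hz, add_zero] at h2
    rw [Matrix.add_mulVec, Matrix.mulVec_mulVec, Matrix.mulVec_mulVec, h2]
    abel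
  · rw [Matrix.mulVec_mulVec, Matrix.mulVec_mulVec, Matrix.mul_assoc]
end

section
/- Suppose A M⁻¹ B = 0, A + B U Bᴴ is invertible, and c > 0. If ũ solves (A + B U Bᴴ) ũ = F and u solves (A + cM) u = F − B U Bᴴ ũ, then Bᴴ u = 0 and there exists p with (A + cM) u + B p = F. -/
open Matrix ComplexOrder

theorem stmt10 {n m : ℕ}
    (A Mm : Matrix (Fin n) (Fin n) ℂ) (B : Matrix (Fin n) (Fin m) ℂ)
    (U : Matrix (Fin m) (Fin m) ℂ)
    (hA : A.PosSemidef) (hM : Mm.PosDef) (hU : U.PosDef)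
    (hAMB : A * Mm⁻¹ * B = 0)
    (hinv : IsUnit (A + B * U * Bᴴ))
    (c : ℝ) (hc : 0 < c) (F utilde u : Fin n → ℂ)
    (htilde : (A + B * U * Bᴴ) *ᵥ utilde = F)
    (hu : (A + (c : ℂ) • Mm) *ᵥ u = F - (B * U * Bᴴ) *ᵥ utilde) :
    Bᴴ *ᵥ u = 0 ∧
      ∃ p : Fin m → ℂ, (A + (c : ℂ) • Mm) *ᵥ u + B *ᵥ p = F := by
  have hBMA : Bᴴ * Mm⁻¹ * A = 0 := by
    have h := congrArg conjTranspose hAMB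
    simpa [Matrix.conjTranspose_mul, hM.isHermitian.inv.eq, hA.isHermitian.eq,
      Matrix.mul_assoc] using h
  have huA : (A + (c : ℂ) • Mm) *ᵥ u = A *ᵥ utilde := by
    rw [hu, ← htilde, Matrix.add_mulVec]
    abel
  have hMM : Mm⁻¹ * Mm = 1 := Matrix.nonsing_inv_mul Mm ((Matrix.isUnit_iff_isUnit_det _).1 hM.isUnit) 
  have hBu : Bᴴ *ᵥ u = 0 := by
    have h1 := congrArg (fun v => (Bᴴ * Mm⁻¹) *ᵥ v) huA
    simp only [Matrix.mulVec_mulVec] at h1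
    rw [Matrix.mul_add, Matrix.mul_smul, Matrix.mul_assoc Bᴴ Mm⁻¹ Mm, hMM,
      Matrix.mul_one, Matrix.mul_assoc, ← Matrix.mul_assoc Bᴴ Mm⁻¹ A, hBMA] at h1
    simp only [Matrix.add_mulVec, Matrix.zero_mulVec, Matrix.zero_mul, zero_add,
      Matrix.smul_mulVec] at h1
    have hc' : (c : ℂ) ≠ 0 := by exact_mod_cast hc.ne'
    have := smul_eq_zero.mp h1
    tauto
  refine ⟨hBu, ⟨U *ᵥ (Bᴴ *ᵥ utilde), ?_⟩⟩
  rw [huA, ← htilde, Matrix.add_mulVec]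
  simp [Matrix.mulVec_mulVec, Matrix.mul_assoc]
end

section
/- Suppose A M⁻¹ B = 0 and A + B U Bᴴ is invertible. For distinct positive numbers α₁ ≠ α₂, let u₁ and u₂ be the unique solutions of (A + α₁ B U Bᴴ) u₁ = F and (A + α₂ B U Bᴴ) u₂ = F. Then u := (α₁ u₁ − α₂ u₂)/(α₁ − α₂) satisfies Bᴴ u = 0 and there exists p with A u + B p = F. -/
open Matrix ComplexOrder

lemma posdef_vec_zero {k : ℕ} {P : Matrix (Fin k) (Fin k) ℂ} (hP : P.PosDef)
    {x : Fin k → ℂ} (h : star x ⬝ᵥ (P *ᵥ x) = 0) : x = 0 := by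
  by_contra hx
  exact (hP.dotProduct_mulVec_pos hx).ne' h

theorem stmt11 {n m : ℕ}
    (A Mm : Matrix (Fin n) (Fin n) ℂ) (B : Matrix (Fin n) (Fin m) ℂ)
    (U : Matrix (Fin m) (Fin m) ℂ)
    (hA : A.PosSemidef) (hM : Mm.PosDef) (hU : U.PosDef)
    (hAMB : A * Mm⁻¹ * B = 0)
    (hinv : IsUnit (A + B * U * Bᴴ))
    (α₁ α₂ : ℝ) (hα₁ : 0 < α₁) (hα₂ : 0 < α₂) (hne : α₁ ≠ α₂)
    (F u₁ u₂ : Fin n → ℂ)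
    (h₁ : (A + (α₁ : ℂ) • (B * U * Bᴴ)) *ᵥ u₁ = F)
    (h₂ : (A + (α₂ : ℂ) • (B * U * Bᴴ)) *ᵥ u₂ = F) :
    Bᴴ *ᵥ (((α₁ : ℂ) - α₂)⁻¹ • ((α₁ : ℂ) • u₁ - (α₂ : ℂ) • u₂)) = 0 ∧
      ∃ p : Fin m → ℂ,
        A *ᵥ (((α₁ : ℂ) - α₂)⁻¹ • ((α₁ : ℂ) • u₁ - (α₂ : ℂ) • u₂)) + B *ᵥ p = F := by
  set V := B * U * Bᴴ with hV
  set w : Fin n → ℂ := (α₁ : ℂ) • u₁ - (α₂ : ℂ) • u₂ with hw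
  have hc : ((α₁ : ℂ) - α₂) ≠ 0 := by
    rw [sub_ne_zero]
    exact_mod_cast hne
  have h₁' : A *ᵥ u₁ + (α₁ : ℂ) • (V *ᵥ u₁) = F := by
    rw [← h₁, add_mulVec, smul_mulVec]
  have h₂' : A *ᵥ u₂ + (α₂ : ℂ) • (V *ᵥ u₂) = F := by
    rw [← h₂, add_mulVec, smul_mulVec]
  -- difference equation
  have eq1 : V *ᵥ w = -(A *ᵥ (u₁ - u₂)) := by
    have := congrArg₂ (· - ·) h₁' h₂'
    simp only [sub_self] at this
    rw [hw, mulVec_sub, mulVec_smul, mulVec_smul, mulVec_sub]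
    linear_combination (norm := module) this
  -- Bᴴ Mm⁻¹ A = 0
  have hBMA : Bᴴ * Mm⁻¹ * A = 0 := by
    have := congrArg conjTranspose hAMB
    simpa [conjTranspose_mul, hA.1.eq, hM.isHermitian.inv.eq, Matrix.mul_assoc,
      ← Matrix.mul_assoc] using this
  have hVw : V *ᵥ w = 0 := by
    -- y := V *ᵥ w satisfies Bᴴ Mm⁻¹ y = 0
    have hy : Bᴴ *ᵥ (Mm⁻¹ *ᵥ (V *ᵥ w)) = 0 := by
      rw [eq1, mulVec_neg, mulVec_neg, mulVec_mulVec, mulVec_mulVec, hBMA]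
      simp
    -- quadratic form of Mm⁻¹ at y is zero
    have hquad : star (V *ᵥ w) ⬝ᵥ (Mm⁻¹ *ᵥ (V *ᵥ w)) = 0 := by
      have : V *ᵥ w = B *ᵥ ((U * Bᴴ) *ᵥ w) := by
        rw [mulVec_mulVec, hV, Matrix.mul_assoc]
      calc star (V *ᵥ w) ⬝ᵥ (Mm⁻¹ *ᵥ (V *ᵥ w))
          = star ((U * Bᴴ) *ᵥ w) ⬝ᵥ (Bᴴ *ᵥ (Mm⁻¹ *ᵥ (V *ᵥ w))) := by
            rw [this, star_mulVec, ← dotProduct_mulVec, mulVec_mulVec]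
        _ = 0 := by rw [hy, dotProduct_zero]
    exact posdef_vec_zero hM.inv hquad
  have hBw : Bᴴ *ᵥ w = 0 := by
    have hquad : star (Bᴴ *ᵥ w) ⬝ᵥ (U *ᵥ (Bᴴ *ᵥ w)) = 0 := by
      have : star w ⬝ᵥ (V *ᵥ w) = star (Bᴴ *ᵥ w) ⬝ᵥ (U *ᵥ (Bᴴ *ᵥ w)) := by
        rw [star_mulVec, conjTranspose_conjTranspose, ← dotProduct_mulVec]
        simp [hV, mulVec_mulVec, Matrix.mul_assoc]
      rw [← this, hVw, dotProduct_zero]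
    exact posdef_vec_zero hU hquad
  constructor
  · rw [mulVec_smul, hBw, smul_zero]
  · refine ⟨((α₁ : ℂ) - α₂)⁻¹ • (((α₁ : ℂ) ^ 2) • ((U * Bᴴ) *ᵥ u₁) -
      ((α₂ : ℂ) ^ 2) • ((U * Bᴴ) *ᵥ u₂)), ?_⟩
    have hA₁ : A *ᵥ u₁ = F - (α₁ : ℂ) • (V *ᵥ u₁) := by
      rw [← h₁']; module
    have hA₂ : A *ᵥ u₂ = F - (α₂ : ℂ) • (V *ᵥ u₂) := by
      rw [← h₂']; module
    have hBV : ∀ v : Fin n → ℂ, B *ᵥ ((U * Bᴴ) *ᵥ v) = V *ᵥ v := by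
      intro v; rw [mulVec_mulVec, hV, Matrix.mul_assoc]
    rw [mulVec_smul, mulVec_smul, mulVec_sub, mulVec_smul, mulVec_smul, mulVec_sub,
      mulVec_smul, mulVec_smul, hBV, hBV, hA₁, hA₂]
    have key : ((α₁ : ℂ) • (F - (α₁ : ℂ) • (V *ᵥ u₁)) - (α₂ : ℂ) • (F - (α₂ : ℂ) • (V *ᵥ u₂)))
        + (((α₁ : ℂ) ^ 2) • (V *ᵥ u₁) - ((α₂ : ℂ) ^ 2) • (V *ᵥ u₂))
        = ((α₁ : ℂ) - α₂) • F := by module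
    rw [← smul_add, key, smul_smul, inv_mul_cancel₀ hc, one_smul]
end

section
/- Suppose A M⁻¹ B = 0 and Ker(A + B U Bᴴ) = {0}. If u_g solves (A + B U Bᴴ) u_g = B U G with G in the range of Bᴴ, then u_g lies in M⁻¹·Range(B), A u_g = 0, and Bᴴ u_g = G. -/
open Matrix ComplexOrder

theorem stmt12 {n m : ℕ}
    (A Mm : Matrix (Fin n) (Fin n) ℂ) (B : Matrix (Fin n) (Fin m) ℂ)
    (U : Matrix (Fin m) (Fin m) ℂ)
    (hA : A.PosSemidef) (hM : Mm.PosDef) (hU : U.PosDef)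
    (hAMB : A * Mm⁻¹ * B = 0)
    (hinv : IsUnit (A + B * U * Bᴴ))
    (G : Fin m → ℂ) (hG : G ∈ LinearMap.range Bᴴ.mulVecLin)
    (ug : Fin n → ℂ)
    (hug : (A + B * U * Bᴴ) *ᵥ ug = (B * U) *ᵥ G) :
    ug ∈ LinearMap.range (Mm⁻¹ * B).mulVecLin ∧
      A *ᵥ ug = 0 ∧ Bᴴ *ᵥ ug = G := by
  have hMi : (Mm⁻¹).PosDef := hM.inv
  set D := (open scoped MatrixOrder in CFC.sqrt (Mm⁻¹)) with hD
  have hDD : D * D = Mm⁻¹ := by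
    open scoped MatrixOrder in exact CFC.sqrt_mul_sqrt_self (Mm⁻¹) hMi.posSemidef.nonneg
  have hDH : Dᴴ = D := by
    open scoped MatrixOrder in exact (CFC.sqrt_nonneg (Mm⁻¹)).posSemidef.1
  have hDdet : IsUnit D.det := by
    have h1 : IsUnit (Mm⁻¹).det := hMi.det_pos.ne'.isUnit
    rw [← hDD, det_mul] at h1
    exact isUnit_of_mul_isUnit_left h1
  -- the key matrix S
  set S := Bᴴ * Mm⁻¹ * B with hS
  have hSfact : S = (D * B)ᴴ * (D * B) := by
    simp only [conjTranspose_mul, hDH, hS, ← hDD, Matrix.mul_assoc]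
  have hrankS : S.rank = Bᴴ.rank := by
    rw [hSfact, rank_conjTranspose_mul_self, rank_mul_eq_right_of_isUnit_det D B hDdet,
      rank_conjTranspose]
  have hle : LinearMap.range S.mulVecLin ≤ LinearMap.range Bᴴ.mulVecLin := by
    rintro x ⟨z, rfl⟩
    exact ⟨(Mm⁻¹ * B) *ᵥ z, by
      simp [hS, mulVec_mulVec, Matrix.mul_assoc]⟩
  have hrange : LinearMap.range S.mulVecLin = LinearMap.range Bᴴ.mulVecLin := by
    apply Submodule.eq_of_le_of_finrank_le hle
    show Module.finrank ℂ _ ≤ Module.finrank ℂ _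
    rw [← Matrix.rank, ← Matrix.rank, hrankS]
  rw [← hrange] at hG
  obtain ⟨z, hz⟩ := hG
  have hz' : (Bᴴ * Mm⁻¹ * B) *ᵥ z = G := hz
  set u := (Mm⁻¹ * B) *ᵥ z with hu
  have key : (A + B * U * Bᴴ) *ᵥ u = (B * U) *ᵥ G := by
    rw [hu, mulVec_mulVec, ← hz', mulVec_mulVec]
    congr 1
    rw [Matrix.add_mul]
    have h1 : A * (Mm⁻¹ * B) = 0 := by rw [← Matrix.mul_assoc, hAMB]
    simp only [h1, zero_add, Matrix.mul_assoc]
  have hdet : IsUnit (A + B * U * Bᴴ).det := (isUnit_iff_isUnit_det _).mp hinv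
  have hugu : ug = u := by
    have h2 : (A + B * U * Bᴴ) *ᵥ ug = (A + B * U * Bᴴ) *ᵥ u := by rw [hug, key]
    have := congrArg (fun v => (A + B * U * Bᴴ)⁻¹ *ᵥ v) h2
    simpa [mulVec_mulVec, nonsing_inv_mul _ hdet] using this
  refine ⟨⟨z, hugu.symm⟩, ?_, ?_⟩
  · rw [hugu, hu, mulVec_mulVec, ← Matrix.mul_assoc, hAMB, zero_mulVec]
  · rw [hugu, hu, mulVec_mulVec, ← Matrix.mul_assoc, hz']
end

section
/- Suppose A M⁻¹ B = 0 and Ker(A + B U Bᴴ) = {0}, and let G ∈ Range(Bᴴ). For distinct α₁, α₂ > 0, let u₁ and u₂ solve (A + α₁ B U Bᴴ) u₁ = F + α₁ B U G and (A + α₂ B U Bᴴ) u₂ = F + α₂ B U G. Then u := (α₁ u₁ − α₂ u₂)/(α₁ − α₂) satisfies Bᴴ u = G and there exists p with A u + B p = F. -/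
open Matrix ComplexOrder

theorem stmt13 {n m : ℕ}
    (A Mm : Matrix (Fin n) (Fin n) ℂ) (B : Matrix (Fin n) (Fin m) ℂ)
    (U : Matrix (Fin m) (Fin m) ℂ)
    (hA : A.PosSemidef) (hM : Mm.PosDef) (hU : U.PosDef)
    (hAMB : A * Mm⁻¹ * B = 0)
    (hinv : IsUnit (A + B * U * Bᴴ))
    (G : Fin m → ℂ) (hG : G ∈ LinearMap.range Bᴴ.mulVecLin)
    (α₁ α₂ : ℝ) (hα₁ : 0 < α₁) (hα₂ : 0 < α₂) (hne : α₁ ≠ α₂)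
    (F : Fin n → ℂ) (u₁ u₂ : Fin n → ℂ)
    (h₁ : (A + (α₁ : ℂ) • (B * U * Bᴴ)) *ᵥ u₁ = F + (α₁ : ℂ) • ((B * U) *ᵥ G))
    (h₂ : (A + (α₂ : ℂ) • (B * U * Bᴴ)) *ᵥ u₂ = F + (α₂ : ℂ) • ((B * U) *ᵥ G)) :
    Bᴴ *ᵥ (((α₁ : ℂ) - α₂)⁻¹ • ((α₁ : ℂ) • u₁ - (α₂ : ℂ) • u₂)) = G ∧
      ∃ p : Fin m → ℂ,
        A *ᵥ (((α₁ : ℂ) - α₂)⁻¹ • ((α₁ : ℂ) • u₁ - (α₂ : ℂ) • u₂)) + B *ᵥ p = F := by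
  obtain ⟨g, hg⟩ := hG
  rw [Matrix.mulVecLin_apply] at hg
  have hdne : ((α₁ : ℂ) - α₂) ≠ 0 := by
    rw [sub_ne_zero]
    exact_mod_cast hne
  set uv : Fin n → ℂ := ((α₁ : ℂ) - α₂)⁻¹ • ((α₁ : ℂ) • u₁ - (α₂ : ℂ) • u₂) with huv
  have hMinv : Mm⁻¹ᴴ = Mm⁻¹ := (hM.isHermitian.inv).eq
  have hCA : Bᴴ * Mm⁻¹ * A = 0 := by
    have := congrArg conjTranspose hAMB
    simpa [Matrix.conjTranspose_mul, hMinv, hA.isHermitian.eq, Matrix.mul_assoc] using this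
  -- rearranged equations
  have h₁' : A *ᵥ u₁ = F + (α₁ : ℂ) • ((B * U) *ᵥ G) - (α₁ : ℂ) • ((B * U) *ᵥ (Bᴴ *ᵥ u₁)) := by
    rw [Matrix.add_mulVec, Matrix.smul_mulVec, ← Matrix.mulVec_mulVec] at h₁
    rw [← h₁]; abel
  have h₂' : A *ᵥ u₂ = F + (α₂ : ℂ) • ((B * U) *ᵥ G) - (α₂ : ℂ) • ((B * U) *ᵥ (Bᴴ *ᵥ u₂)) := by
    rw [Matrix.add_mulVec, Matrix.smul_mulVec, ← Matrix.mulVec_mulVec] at h₂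
    rw [← h₂]; abel
  -- apply Bᴴ Mm⁻¹ to the rearranged equations; the A-term dies
  have key : ∀ (α : ℂ) (w : Fin n → ℂ) (bw : Fin m → ℂ),
      A *ᵥ w = F + α • ((B * U) *ᵥ G) - α • ((B * U) *ᵥ bw) →
      α • ((Bᴴ * Mm⁻¹ * (B * U)) *ᵥ bw) - α • ((Bᴴ * Mm⁻¹ * (B * U)) *ᵥ G)
        = (Bᴴ * Mm⁻¹) *ᵥ F := by
    intro α w bw hw
    have h0 : (Bᴴ * Mm⁻¹) *ᵥ (A *ᵥ w) = 0 := by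
      rw [Matrix.mulVec_mulVec, hCA, Matrix.zero_mulVec]
    rw [hw] at h0
    simp only [Matrix.mulVec_sub, Matrix.mulVec_add, Matrix.mulVec_smul,
      Matrix.mulVec_mulVec] at h0
    have h0' : α • ((Bᴴ * Mm⁻¹ * (B * U)) *ᵥ bw) - α • ((Bᴴ * Mm⁻¹ * (B * U)) *ᵥ G)
        - (Bᴴ * Mm⁻¹) *ᵥ F = 0 := by
      rw [← neg_eq_zero, ← h0]; abel
    exact sub_eq_zero.mp h0'
  have k₁ := key _ _ _ h₁'
  have k₂ := key _ _ _ h₂'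
  -- the quadratic-form argument
  set x : Fin m → ℂ := Bᴴ *ᵥ uv - G with hx
  have hDx : (Bᴴ * Mm⁻¹ * (B * U)) *ᵥ x = 0 := by
    have e : (Bᴴ * Mm⁻¹ * (B * U)) *ᵥ x
        = ((α₁ : ℂ) - α₂)⁻¹ • (((α₁ : ℂ) • ((Bᴴ * Mm⁻¹ * (B * U)) *ᵥ (Bᴴ *ᵥ u₁))
            - (α₁ : ℂ) • ((Bᴴ * Mm⁻¹ * (B * U)) *ᵥ G))
          - ((α₂ : ℂ) • ((Bᴴ * Mm⁻¹ * (B * U)) *ᵥ (Bᴴ *ᵥ u₂))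
            - (α₂ : ℂ) • ((Bᴴ * Mm⁻¹ * (B * U)) *ᵥ G))) := by
      simp only [hx, huv, Matrix.mulVec_sub, Matrix.mulVec_smul]
      match_scalars <;> field_simp <;> ring
    rw [e, k₁, k₂, sub_self, smul_zero]
  have hDx' : Bᴴ *ᵥ (Mm⁻¹ *ᵥ (B *ᵥ (U *ᵥ x))) = 0 := by
    simpa only [← Matrix.mulVec_mulVec] using hDx
  have hquad : star (B *ᵥ (U *ᵥ x)) ⬝ᵥ Mm⁻¹ *ᵥ (B *ᵥ (U *ᵥ x)) = 0 := by
    rw [Matrix.star_mulVec, ← Matrix.dotProduct_mulVec, hDx', dotProduct_zero]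
  have hz0 : B *ᵥ (U *ᵥ x) = 0 := by
    by_contra hzne
    have := hM.inv.dotProduct_mulVec_pos hzne
    rw [hquad] at this
    exact lt_irrefl 0 this
  have hxquad : star x ⬝ᵥ U *ᵥ x = 0 := by
    have hxe : x = Bᴴ *ᵥ (uv - g) := by rw [hx, Matrix.mulVec_sub, hg]
    calc star x ⬝ᵥ U *ᵥ x = (star (uv - g) ᵥ* B) ⬝ᵥ U *ᵥ x := by
          rw [hxe, Matrix.star_mulVec, Matrix.conjTranspose_conjTranspose]
      _ = star (uv - g) ⬝ᵥ B *ᵥ (U *ᵥ x) := by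
          simp only [Matrix.dotProduct_mulVec, Matrix.vecMul_vecMul, Matrix.mulVec_mulVec]
      _ = 0 := by rw [hz0, dotProduct_zero]
  have hx0 : x = 0 := by
    by_contra hxne
    have := hU.dotProduct_mulVec_pos hxne
    rw [hxquad] at this
    exact lt_irrefl 0 this
  have hBu : Bᴴ *ᵥ uv = G := by
    have := hx0
    rw [hx, sub_eq_zero] at this
    exact this
  refine ⟨hBu, ?_⟩
  -- explicit multiplier
  refine ⟨U *ᵥ (((α₁ : ℂ) - α₂)⁻¹ • ((α₁ : ℂ) ^ 2 • (Bᴴ *ᵥ u₁) - (α₂ : ℂ) ^ 2 • (Bᴴ *ᵥ u₂))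
      - ((α₁ : ℂ) + α₂) • G), ?_⟩
  simp only [huv, Matrix.mulVec_smul, Matrix.mulVec_sub, Matrix.mulVec_add, h₁', h₂',
    Matrix.mulVec_mulVec, Matrix.mul_assoc]
  match_scalars <;> field_simp <;> ring
end

section
/- Let H be an N×k complex matrix whose columns form an M-orthonormal basis of Ker(A + B U Bᴴ) (i.e., Hᴴ M H = I and Range(H) = Ker(A + B U Bᴴ)). Then A + B U Bᴴ + M H Hᴴ M is invertible. -/
open Matrix ComplexOrder

theorem stmt14 {n m k : ℕ}
    (A Mm : Matrix (Fin n) (Fin n) ℂ) (B : Matrix (Fin n) (Fin m) ℂ)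
    (U : Matrix (Fin m) (Fin m) ℂ)
    (hA : A.PosSemidef) (hM : Mm.PosDef) (hU : U.PosDef)
    (hAMB : A * Mm⁻¹ * B = 0)
    (H : Matrix (Fin n) (Fin k) ℂ)
    (hH1 : Hᴴ * Mm * H = 1)
    (hH2 : LinearMap.range H.mulVecLin = LinearMap.ker (A + B * U * Bᴴ).mulVecLin) :
    IsUnit (A + B * U * Bᴴ + Mm * H * Hᴴ * Mm) := by
  have hS : (A + B * U * Bᴴ).PosSemidef :=
    hA.add (hU.posSemidef.mul_mul_conjTranspose_same B)
  have hfact : Mm * H * Hᴴ * Mm = (Hᴴ * Mm)ᴴ * (Hᴴ * Mm) := by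
    rw [conjTranspose_mul, conjTranspose_conjTranspose, hM.isHermitian.eq,
      Matrix.mul_assoc, Matrix.mul_assoc]
  have hT : (Mm * H * Hᴴ * Mm).PosSemidef := by
    rw [hfact]; exact posSemidef_conjTranspose_mul_self _
  have hPD : (A + B * U * Bᴴ + Mm * H * Hᴴ * Mm).PosDef := by
    refine .of_dotProduct_mulVec_pos (hS.isHermitian.add hT.isHermitian) fun x hx => ?_
    rcases lt_or_eq_of_le ((hS.add hT).dotProduct_mulVec_nonneg x) with h | h
    · exact h
    exfalso
    have hsum : star x ⬝ᵥ (A + B * U * Bᴴ) *ᵥ x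
        + star x ⬝ᵥ (Mm * H * Hᴴ * Mm) *ᵥ x = 0 := by
      rw [← dotProduct_add, ← add_mulVec]; exact h.symm
    obtain ⟨h1, h2⟩ := (add_eq_zero_iff_of_nonneg (hS.dotProduct_mulVec_nonneg x) (hT.dotProduct_mulVec_nonneg x)).mp hsum
    -- From h1 : x is in the kernel of A + B U Bᴴ, hence in the range of H
    have hker : (A + B * U * Bᴴ) *ᵥ x = 0 := (hS.dotProduct_mulVec_zero_iff x).mp h1
    have hmem : x ∈ LinearMap.range H.mulVecLin := by
      rw [hH2]; exact hker
    obtain ⟨y, hy⟩ := hmem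
    rw [Matrix.mulVecLin_apply] at hy
    -- From h2 : Hᴴ Mm x = 0
    have hz : (Hᴴ * Mm) *ᵥ x = 0 := by
      have := (hT.dotProduct_mulVec_zero_iff x).mp h2
      have h3 : star ((Hᴴ * Mm) *ᵥ x) ⬝ᵥ ((Hᴴ * Mm) *ᵥ x) = 0 := by
        have : star x ⬝ᵥ ((Hᴴ * Mm)ᴴ * (Hᴴ * Mm)) *ᵥ x = 0 := by rw [← hfact]; exact h2
        rwa [← Matrix.mulVec_mulVec, dotProduct_mulVec, vecMul_conjTranspose, star_star]
          at this
      exact (dotProduct_star_self_eq_zero).mp h3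
    -- But Hᴴ Mm x = Hᴴ Mm H y = y, so y = 0 and x = 0
    have hy0 : y = 0 := by
      have : (Hᴴ * Mm) *ᵥ (H *ᵥ y) = 0 := by rw [hy]; exact hz
      rwa [Matrix.mulVec_mulVec, Matrix.mul_assoc, ← Matrix.mul_assoc, hH1,
        Matrix.one_mulVec] at this
    apply hx
    rw [← hy, hy0, Matrix.mulVec_zero]
  exact hPD.isUnit
end

section
/- Let λ_min be the minimum nonzero eigenvalue of the generalized eigenvalue problem (A + B U Bᴴ) u = λ M u, and let H have M-orthonormal columns spanning the λ=0 eigenspace. Then every eigenvalue of (A + B U Bᴴ + M)⁻¹ (A + B U Bᴴ + M H Hᴴ M) lies in the interval [1 − 1/(1 + λ_min), 1]. -/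
open Matrix ComplexOrder

-- helper: from 0 ≤ z, 0 < w and z = c*w (real c), get 0 ≤ c
private lemma aux_nonneg {z w : ℂ} {c : ℝ} (hz : 0 ≤ z) (hw : 0 < w)
    (h : z = (c : ℂ) * w) : 0 ≤ c := by
  have hzre : 0 ≤ z.re := (Complex.nonneg_iff.mp hz).1
  have hwre : 0 < w.re := (Complex.pos_iff.mp hw).1
  have hwim : w.im = 0 := ((Complex.pos_iff.mp hw).2).symm
  have : z.re = c * w.re := by
    rw [h]; simp [Complex.mul_re, hwim]
  nlinarith

theorem stmt16 {n m k : ℕ}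
    (A Mm : Matrix (Fin n) (Fin n) ℂ) (B : Matrix (Fin n) (Fin m) ℂ)
    (U : Matrix (Fin m) (Fin m) ℂ)
    (hA : A.PosSemidef) (hM : Mm.PosDef) (hU : U.PosDef)
    (hAMB : A * Mm⁻¹ * B = 0)
    (H : Matrix (Fin n) (Fin k) ℂ)
    (hH1 : Hᴴ * Mm * H = 1)
    (hH2 : LinearMap.range H.mulVecLin = LinearMap.ker (A + B * U * Bᴴ).mulVecLin)
    (lammin : ℝ) (hlam0 : lammin ≠ 0)
    (hlameig : ∃ u : Fin n → ℂ, u ≠ 0 ∧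
      (A + B * U * Bᴴ) *ᵥ u = (lammin : ℂ) • (Mm *ᵥ u))
    (hlammin : ∀ (μ : ℝ) (u : Fin n → ℂ), u ≠ 0 → μ ≠ 0 →
      (A + B * U * Bᴴ) *ᵥ u = (μ : ℂ) • (Mm *ᵥ u) → lammin ≤ μ) :
    ∀ (μ : ℂ) (u : Fin n → ℂ), u ≠ 0 →
      ((A + B * U * Bᴴ + Mm)⁻¹ * (A + B * U * Bᴴ + Mm * H * Hᴴ * Mm)) *ᵥ u = μ • u →
        ∃ t : ℝ, μ = (t : ℂ) ∧ 1 - 1 / (1 + lammin) ≤ t ∧ t ≤ 1 := by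
  intro μ u hu hequ
  set S := A + B * U * Bᴴ with hSdef
  have hS : S.PosSemidef := hA.add (hU.posSemidef.mul_mul_conjTranspose_same B)
  have hT : (S + Mm).PosDef := Matrix.PosDef.posSemidef_add hS hM
  -- λmin > 0
  have hlampos : 0 < lammin := by
    obtain ⟨v, hv, hveq⟩ := hlameig
    have : star v ⬝ᵥ (S *ᵥ v) = (lammin : ℂ) * (star v ⬝ᵥ (Mm *ᵥ v)) := by
      rw [hveq, dotProduct_smul, smul_eq_mul]
    exact lt_of_le_of_ne (aux_nonneg (hS.dotProduct_mulVec_nonneg v) (hM.dotProduct_mulVec_pos hv) this) (Ne.symm hlam0)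
  -- convert the eigenvalue equation to W *ᵥ u = μ • ((S+Mm) *ᵥ u)
  have hTinv : (S + Mm) * (S + Mm)⁻¹ = 1 := Matrix.mul_nonsing_inv _ hT.det_pos.ne'.isUnit
  have hW : (S + Mm * H * Hᴴ * Mm) *ᵥ u = μ • ((S + Mm) *ᵥ u) := by
    have := congrArg (fun w => (S + Mm) *ᵥ w) hequ
    simpa [Matrix.mulVec_mulVec, ← Matrix.mul_assoc, hTinv, Matrix.mulVec_smul] using this
  -- the projection onto ker S
  set x := Hᴴ *ᵥ (Mm *ᵥ u) with hxdef
  set u₀ := H *ᵥ x with hu₀def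
  set u₁ := u - u₀ with hu₁def
  have hSu₀ : S *ᵥ u₀ = 0 := by
    have : u₀ ∈ LinearMap.range H.mulVecLin := ⟨x, rfl⟩
    rw [hH2] at this
    simpa using this
  have hfix : ∀ w : Fin k → ℂ, Hᴴ *ᵥ (Mm *ᵥ (H *ᵥ w)) = w := by
    intro w
    rw [Matrix.mulVec_mulVec, Matrix.mulVec_mulVec, hH1, Matrix.one_mulVec]
  have hHMu₁ : Hᴴ *ᵥ (Mm *ᵥ u₁) = 0 := by
    rw [hu₁def, Matrix.mulVec_sub, Matrix.mulVec_sub, hu₀def, hfix]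
    simp [hxdef]
  -- orthogonality: star u₀ ⬝ᵥ Mm *ᵥ u₁ = 0
  have horth : star u₀ ⬝ᵥ (Mm *ᵥ u₁) = 0 := by
    rw [hu₀def, Matrix.star_mulVec, ← Matrix.dotProduct_mulVec, Matrix.dotProduct_mulVec,
      ← Matrix.dotProduct_mulVec, hHMu₁, dotProduct_zero]
  -- star u₀ ⬝ᵥ S *ᵥ w = 0 for any w
  have horthS : ∀ w, star u₀ ⬝ᵥ (S *ᵥ w) = 0 := by
    intro w
    have h1 : star u₀ ᵥ* S = 0 := by
      have h2 : star (S *ᵥ u₀) = star u₀ ᵥ* Sᴴ := by simp [Matrix.star_mulVec]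
      rw [hSu₀, hS.1] at h2
      simpa using h2.symm
    rw [Matrix.dotProduct_mulVec, h1, zero_dotProduct]
  have hproj : (Mm * H * Hᴴ * Mm) *ᵥ u = Mm *ᵥ u₀ := by
    rw [hu₀def, hxdef]
    simp [Matrix.mulVec_mulVec, Matrix.mul_assoc]
  have hE : S *ᵥ u + Mm *ᵥ u₀ = μ • (S *ᵥ u) + μ • (Mm *ᵥ u) := by
    have h := hW
    simp only [Matrix.add_mulVec, smul_add] at h
    rw [hproj] at h
    exact h
  by_cases h0 : u₀ = 0
  · -- u is Mm-orthogonal to the kernel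
    have hE' : S *ᵥ u = μ • (S *ᵥ u) + μ • (Mm *ᵥ u) := by
      have := hE; rw [h0] at this; simpa using this
    set a := star u ⬝ᵥ (S *ᵥ u) with hadef
    set b := star u ⬝ᵥ (Mm *ᵥ u) with hbdef
    have ha : 0 ≤ a := hS.dotProduct_mulVec_nonneg u
    have hb : 0 < b := hM.dotProduct_mulVec_pos hu
    have haR : a = ((a.re : ℝ) : ℂ) := by
      apply Complex.ext
      · simp
      · simpa using ((Complex.nonneg_iff.mp ha).2).symm
    have hbR : b = ((b.re : ℝ) : ℂ) := by
      apply Complex.ext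
      · simp
      · simpa using ((Complex.pos_iff.mp hb).2).symm
    set ar := a.re with hardef
    set br := b.re with hbrdef
    have harn : 0 ≤ ar := (Complex.nonneg_iff.mp ha).1
    have hbrp : 0 < br := (Complex.pos_iff.mp hb).1
    have habp : 0 < ar + br := by linarith
    -- pair hE' with star u
    have hpair : a = μ * a + μ * b := by
      have := congrArg (fun w => star u ⬝ᵥ w) hE'
      simpa [dotProduct_add, dotProduct_smul, smul_eq_mul] using this
    have hmu : μ = ((ar / (ar + br) : ℝ) : ℂ) := by
      rw [haR, hbR] at hpair
      have h1 : ((ar : ℂ) + br) ≠ 0 := by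
        rw [show ((ar : ℂ) + br) = (((ar + br : ℝ)) : ℂ) by push_cast; ring]
        exact_mod_cast habp.ne'
      push_cast
      rw [eq_div_iff h1]
      linear_combination -hpair
    refine ⟨ar / (ar + br), hmu, ?_, ?_⟩
    · -- lower bound via generalized eigenvalue
      set ν := ar / br with hnudef
      have hnun : 0 ≤ ν := div_nonneg harn hbrp.le
      have hmune : (1 : ℂ) - μ = ((br / (ar + br) : ℝ) : ℂ) := by
        rw [hmu]
        push_cast
        field_simp
        ring
      have h1mu : (1 : ℂ) - μ ≠ 0 := by
        rw [hmune]
        have : br / (ar + br) ≠ 0 := by positivity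
        exact_mod_cast this
      have hcoef : ((1:ℂ) - μ)⁻¹ * μ = ((ν : ℝ) : ℂ) := by
        rw [hmune, hmu, hnudef]
        have h4 : ar + br ≠ 0 := habp.ne'
        have h5 : br ≠ 0 := hbrp.ne'
        push_cast
        field_simp
      have heig : S *ᵥ u = ((ν : ℝ) : ℂ) • (Mm *ᵥ u) := by
        have h2 : ((1 : ℂ) - μ) • (S *ᵥ u) = μ • (Mm *ᵥ u) := by
          rw [sub_smul, one_smul, sub_eq_iff_eq_add]
          exact hE'.trans (add_comm _ _)
        have h3 := congrArg (fun w => (((1:ℂ) - μ)⁻¹) • w) h2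
        simp only [smul_smul, inv_mul_cancel₀ h1mu, one_smul] at h3
        rw [h3, hcoef]
      have hnu0 : ν ≠ 0 := by
        intro hz
        have har0 : ar = 0 := by
          have := hz
          rw [hnudef, div_eq_zero_iff] at this
          rcases this with h | h
          · exact h
          · exact absurd h hbrp.ne'
        have hmu0 : μ = 0 := by rw [hmu, har0]; simp
        have hSu : S *ᵥ u = 0 := by
          rw [hmu0] at hE'; simpa using hE'
        have : u ∈ LinearMap.range H.mulVecLin := by
          rw [hH2]
          simpa using hSu
        obtain ⟨w, hw⟩ := this
        simp only [Matrix.mulVecLin_apply] at hw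
        apply hu
        have : u₀ = u := by
          rw [hu₀def, hxdef, ← hw, hfix, hw]
        rw [← this, h0]
      have hle : lammin ≤ ν := hlammin ν u hu hnu0 heig
      have hl1 : (0:ℝ) < 1 + lammin := by linarith
      have hkey2 : lammin * br ≤ ar := (le_div_iff₀ hbrp).mp hle
      rw [show (1:ℝ) - 1 / (1 + lammin) = lammin / (1 + lammin) from by field_simp; ring]
      rw [div_le_div_iff₀ hl1 habp]
      nlinarith
    · rw [div_le_one habp]; linarith
  · -- u₀ ≠ 0 forces μ = 1
    have hc : 0 < star u₀ ⬝ᵥ (Mm *ᵥ u₀) := hM.dotProduct_mulVec_pos h0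
    have hkey : star u₀ ⬝ᵥ (Mm *ᵥ u₀) = μ * (star u₀ ⬝ᵥ (Mm *ᵥ u₀)) := by
      have h := congrArg (fun w => star u₀ ⬝ᵥ w) hE
      have husplit : star u₀ ⬝ᵥ (Mm *ᵥ u) = star u₀ ⬝ᵥ (Mm *ᵥ u₀) := by
        have h8 : u = u₁ + u₀ := by funext i; simp [hu₁def]
        rw [h8, Matrix.mulVec_add, dotProduct_add, horth]
        simp
      simpa [dotProduct_add, dotProduct_smul, smul_eq_mul, horthS, husplit] using h
    have hmu1 : μ = 1 := by
      have h9 : (μ - 1) * (star u₀ ⬝ᵥ (Mm *ᵥ u₀)) = 0 := by linear_combination -hkey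
      rcases mul_eq_zero.mp h9 with h | h
      · exact sub_eq_zero.mp h
      · exact absurd h hc.ne'
    refine ⟨1, by rw [hmu1]; norm_num, ?_, le_refl 1⟩
    have : 0 < 1 + lammin := by linarith
    have : 0 < 1 / (1 + lammin) := by positivity
    linarith
end

section
/- Suppose A M⁻¹ B = 0, c > 0, and let C₀ = Ker(A + B U Bᴴ) be nontrivial with H an M-orthonormal basis matrix of C₀. If ũ solves (A + B U Bᴴ + M H Hᴴ M) ũ = F and u solves (A + B U Bᴴ + cM) u = F − B U Bᴴ ũ, then Bᴴ u = 0 and there exists p with (A + cM) u + B p = F. -/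
open Matrix ComplexOrder

theorem stmt17 {n m k : ℕ}
    (A Mm : Matrix (Fin n) (Fin n) ℂ) (B : Matrix (Fin n) (Fin m) ℂ)
    (U : Matrix (Fin m) (Fin m) ℂ)
    (hA : A.PosSemidef) (hM : Mm.PosDef) (hU : U.PosDef)
    (hAMB : A * Mm⁻¹ * B = 0)
    (H : Matrix (Fin n) (Fin k) ℂ)
    (hH1 : Hᴴ * Mm * H = 1)
    (hH2 : LinearMap.range H.mulVecLin = LinearMap.ker (A + B * U * Bᴴ).mulVecLin)
    (hC0 : LinearMap.ker (A + B * U * Bᴴ).mulVecLin ≠ ⊥)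
    (c : ℝ) (hc : 0 < c) (F utilde u : Fin n → ℂ)
    (htilde : (A + B * U * Bᴴ + Mm * H * Hᴴ * Mm) *ᵥ utilde = F)
    (hu : (A + B * U * Bᴴ + (c : ℂ) • Mm) *ᵥ u = F - (B * U * Bᴴ) *ᵥ utilde) :
    Bᴴ *ᵥ u = 0 ∧
      ∃ p : Fin m → ℂ, (A + (c : ℂ) • Mm) *ᵥ u + B *ᵥ p = F := by
  have hMu : IsUnit Mm.det := (Matrix.isUnit_iff_isUnit_det _).1 hM.isUnit
  have hNM : Mm⁻¹ * Mm = 1 := Matrix.nonsing_inv_mul _ hMu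
  -- key : kernel of A + BUBᴴ is inside kernel of Bᴴ
  have key : ∀ x : Fin n → ℂ, (A + B * U * Bᴴ) *ᵥ x = 0 → Bᴴ *ᵥ x = 0 := by
    intro x hx
    by_contra hne
    have h1 : 0 ≤ star x ⬝ᵥ (A *ᵥ x) := hA.dotProduct_mulVec_nonneg x
    have h2 : 0 < star (Bᴴ *ᵥ x) ⬝ᵥ (U *ᵥ (Bᴴ *ᵥ x)) := hU.dotProduct_mulVec_pos hne
    have h3 : star x ⬝ᵥ ((B * U * Bᴴ) *ᵥ x)
        = star (Bᴴ *ᵥ x) ⬝ᵥ (U *ᵥ (Bᴴ *ᵥ x)) := by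
      simp [star_mulVec, dotProduct_mulVec, vecMul_vecMul, Matrix.mul_assoc]
    have h0 : star x ⬝ᵥ (A *ᵥ x) + star x ⬝ᵥ ((B * U * Bᴴ) *ᵥ x) = 0 := by
      rw [← dotProduct_add, ← add_mulVec, hx, dotProduct_zero]
    exact absurd h0 (add_pos_of_nonneg_of_pos h1 (h3.symm ▸ h2)).ne'
  -- Bᴴ H = 0
  have hBH : Bᴴ * H = 0 := by
    ext i j
    have hcol : H.mulVecLin (Pi.single j 1) ∈ LinearMap.range H.mulVecLin :=
      ⟨_, rfl⟩
    rw [hH2, LinearMap.mem_ker] at hcol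
    have h4 : Bᴴ *ᵥ (H *ᵥ Pi.single j 1) = 0 := by
      apply key
      simpa [Matrix.mulVecLin_apply, add_mulVec, Matrix.mul_assoc] using hcol
    have h5 := congrFun h4 i
    rw [mulVec_mulVec, mulVec_single] at h5
    simpa using h5
  -- Bᴴ M⁻¹ A = 0
  have hNherm : Mm⁻¹ᴴ = Mm⁻¹ := by
    rw [Matrix.conjTranspose_nonsing_inv, hM.1.eq]
  have hGA : Bᴴ * (Mm⁻¹ * A) = 0 := by
    have := congrArg conjTranspose hAMB
    simpa [Matrix.conjTranspose_mul, hNherm, hA.1.eq, Matrix.mul_assoc] using this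
  have hMH : Mm⁻¹ * (Mm * (H * (Hᴴ * Mm))) = H * (Hᴴ * Mm) := by
    rw [← Matrix.mul_assoc, hNM, Matrix.one_mul]
  have hBH' : Bᴴ * (H * (Hᴴ * Mm)) = 0 := by
    rw [← Matrix.mul_assoc, hBH, Matrix.zero_mul]
  -- matrix identity for the htilde equation
  have hm1 : Bᴴ * Mm⁻¹ * (A + B * U * Bᴴ + Mm * H * Hᴴ * Mm)
      = Bᴴ * Mm⁻¹ * B * U * Bᴴ := by
    simp only [Matrix.mul_assoc, Matrix.mul_add, hMH, hBH', hGA, zero_add, add_zero]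
  have e1 : (Bᴴ * Mm⁻¹ * B * U * Bᴴ) *ᵥ utilde = (Bᴴ * Mm⁻¹) *ᵥ F := by
    rw [← hm1, ← mulVec_mulVec, htilde]
  -- matrix identity for the hu equation
  have hm2 : Bᴴ * Mm⁻¹ * (A + B * U * Bᴴ + (c : ℂ) • Mm)
      = Bᴴ * Mm⁻¹ * B * U * Bᴴ + (c : ℂ) • Bᴴ := by
    simp only [Matrix.mul_assoc, Matrix.mul_add, hGA, zero_add, Matrix.mul_smul, hNM,
      Matrix.mul_one]
  have e2 : (Bᴴ * Mm⁻¹ * B * U * Bᴴ) *ᵥ u + (c : ℂ) • (Bᴴ *ᵥ u) = 0 := by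
    have := congrArg (fun y => (Bᴴ * Mm⁻¹) *ᵥ y) hu
    simp only [mulVec_mulVec, hm2] at this
    rw [add_mulVec, smul_mulVec] at this
    rw [this, Matrix.mulVec_sub, mulVec_mulVec]
    rw [show Bᴴ * Mm⁻¹ * (B * U * Bᴴ) = Bᴴ * Mm⁻¹ * B * U * Bᴴ by
      simp [Matrix.mul_assoc]]
    rw [e1]
    simp
  -- show Bᴴ u = 0
  have hBu : Bᴴ *ᵥ u = 0 := by
    by_contra hne
    set v := Bᴴ *ᵥ u with hv
    set w := U *ᵥ v with hw
    have hPS : (Bᴴ * Mm⁻¹ * B).PosSemidef :=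
      hM.inv.posSemidef.conjTranspose_mul_mul_same B
    have h1 : 0 ≤ star w ⬝ᵥ ((Bᴴ * Mm⁻¹ * B) *ᵥ w) := hPS.dotProduct_mulVec_nonneg w
    have h2 : 0 < star v ⬝ᵥ (U *ᵥ v) := hU.dotProduct_mulVec_pos hne
    have hwv : star w ⬝ᵥ v = star v ⬝ᵥ (U *ᵥ v) := by
      rw [hw, star_mulVec, hU.1.eq, ← dotProduct_mulVec]
    have e3 : (Bᴴ * Mm⁻¹ * B) *ᵥ w + (c : ℂ) • v = 0 := by
      have : (Bᴴ * Mm⁻¹ * B * U * Bᴴ) *ᵥ u = (Bᴴ * Mm⁻¹ * B) *ᵥ w := by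
        rw [hw, hv, mulVec_mulVec, mulVec_mulVec]
      rw [← this]; exact e2
    have h0 : star w ⬝ᵥ ((Bᴴ * Mm⁻¹ * B) *ᵥ w) + (c : ℂ) * (star w ⬝ᵥ v) = 0 := by
      have := congrArg (fun y => star w ⬝ᵥ y) e3
      simpa [dotProduct_add, dotProduct_smul, smul_eq_mul] using this
    have hcpos : (0 : ℂ) < (c : ℂ) := by exact_mod_cast hc
    have hpos : 0 < (c : ℂ) * (star w ⬝ᵥ v) := by
      rw [hwv]; exact mul_pos hcpos h2
    exact absurd h0 (add_pos_of_nonneg_of_pos h1 hpos).ne'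
  refine ⟨hBu, ⟨U *ᵥ (Bᴴ *ᵥ utilde), ?_⟩⟩
  have hz : (B * U * Bᴴ) *ᵥ u = 0 := by
    rw [← mulVec_mulVec, ← mulVec_mulVec, hBu]
    simp
  rw [add_mulVec, add_mulVec, hz] at hu
  rw [add_mulVec, mulVec_mulVec, mulVec_mulVec]
  have hu' : A *ᵥ u + ((c : ℂ) • Mm) *ᵥ u = F - (B * U * Bᴴ) *ᵥ utilde := by
    rw [← hu]; abel
  rw [hu']
  abel
end
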